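/- Let m be a positive integer and l a nonnegative integer, and define f : ℝ³ → ℂ by f(x,y,z) = He_l(√(2m)·x) · exp(−m x²/2) · exp(i m z), where He_l is the l-th (probabilists') Hermite polynomial. Then f is smooth and satisfies −(X² f + Y² f) = m(2l+1) f on ℝ³, where X = ∂/∂x and Y = ∂/∂y − x ∂/∂z; explicitly, −(∂²f/∂x² + ∂²f/∂y² − 2x ∂²f/∂y∂z + x² ∂²f/∂z²) = m(2l+1) f. (This exhibits the eigenvalues m(2l+1) of the Heisenberg sub-Laplacian Δ = −(X²+Y²).) -/

import Mathlib

open Real Polynomial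

/-- The candidate eigenfunction `f(x,y,z) = He_l(√(2m) x) e^{-m x²/2} e^{i m z}` of the
Heisenberg sub-Laplacian. -/
noncomputable def heisenbergEigenfunction (m : ℕ) (l : ℕ) (x y z : ℝ) : ℂ :=
  ((Polynomial.aeval (Real.sqrt (2 * (m : ℝ)) * x) (Polynomial.hermite l) *
      Real.exp (-(m : ℝ) * x ^ 2 / 2) : ℝ) : ℂ) *
    Complex.exp (Complex.I * (m : ℂ) * (z : ℂ))

lemma hermite_derivative (n : ℕ) :
    derivative (hermite (n + 1)) = (n + 1 : ℕ) • hermite n := by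
  induction n with
  | zero => simp [hermite_one]
  | succ n ih =>
      rw [hermite_succ (n + 1), derivative_sub, derivative_mul, derivative_X, ih,
        derivative_smul, one_mul, hermite_succ, mul_smul_comm, smul_sub]
      module

lemma hermite_ode (l : ℕ) :
    X * derivative (hermite l) - derivative (derivative (hermite l))
      = (l : ℕ) • hermite l := by
  cases l with
  | zero => simp
  | succ n =>
      rw [hermite_derivative, derivative_smul, mul_smul_comm, ← smul_sub, ← hermite_succ]

lemma contDiff_poly_eval (p : ℝ[X]) : ContDiff ℝ (⊤ : ℕ∞) fun x : ℝ => p.eval x := by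
  induction p using Polynomial.induction_on' with
  | add p q hp hq => simpa using hp.add hq
  | monomial n a =>
      simpa [Polynomial.eval_monomial] using (contDiff_const (c := a)).mul (contDiff_id.pow n)

section
variable (m l : ℕ)

/-- the real polynomial `He_l` -/
noncomputable def Hr : ℝ[X] := (hermite l).map (Int.castRingHom ℝ)

noncomputable def cG (x : ℝ) : ℝ :=
  (Hr l).eval (Real.sqrt (2 * m) * x) * Real.exp (-(m : ℝ) * x ^ 2 / 2)

noncomputable def cG1 (x : ℝ) : ℝ :=
  (Real.sqrt (2 * m) * (derivative (Hr l)).eval (Real.sqrt (2 * m) * x)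
      - m * x * (Hr l).eval (Real.sqrt (2 * m) * x)) * Real.exp (-(m : ℝ) * x ^ 2 / 2)

lemma hermite_ode_real (u : ℝ) :
    u * (derivative (Hr l)).eval u - (derivative (derivative (Hr l))).eval u
      = l * (Hr l).eval u := by
  have h := congrArg (fun q : ℤ[X] => (q.map (Int.castRingHom ℝ)).eval u) (hermite_ode l)
  simpa [Hr, Polynomial.derivative_map] using h

lemma heis_eq (x y z : ℝ) :
    heisenbergEigenfunction m l x y z
      = ((cG m l x : ℝ) : ℂ) * Complex.exp (Complex.I * (m : ℂ) * (z : ℂ)) := by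
  have h : (Polynomial.aeval (Real.sqrt (2 * (m : ℝ)) * x) (hermite l) : ℝ)
      = (Hr l).eval (Real.sqrt (2 * m) * x) := by
    rw [Polynomial.aeval_def, Polynomial.eval₂_eq_eval_map]
    rfl
  simp only [heisenbergEigenfunction, cG, h]

lemma expDeriv (x : ℝ) :
    HasDerivAt (fun x : ℝ => Real.exp (-(m : ℝ) * x ^ 2 / 2))
      (Real.exp (-(m : ℝ) * x ^ 2 / 2) * (-(m : ℝ) * x)) x := by
  have h : HasDerivAt (fun x : ℝ => -(m : ℝ) * x ^ 2 / 2) (-(m : ℝ) * x) x := by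
    have := ((hasDerivAt_pow 2 x).const_mul (-(m : ℝ))).div_const 2
    refine this.congr_deriv ?_
    ring
  exact h.exp

lemma polyDeriv (p : ℝ[X]) (x : ℝ) :
    HasDerivAt (fun x : ℝ => p.eval (Real.sqrt (2 * m) * x))
      (Real.sqrt (2 * m) * (derivative p).eval (Real.sqrt (2 * m) * x)) x := by
  have h1 := p.hasDerivAt (Real.sqrt (2 * m) * x)
  have h2 : HasDerivAt (fun x : ℝ => Real.sqrt (2 * m) * x) (Real.sqrt (2 * m)) x := by
    simpa using (hasDerivAt_id x).const_mul (Real.sqrt (2 * m))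
  simpa [Function.comp_def, mul_comm] using h1.comp x h2

lemma cGDeriv (x : ℝ) : HasDerivAt (cG m l) (cG1 m l x) x := by
  have := (polyDeriv m (Hr l) x).mul (expDeriv m x)
  refine this.congr_deriv ?_
  unfold cG1
  ring

lemma cG1Deriv (x : ℝ) :
    HasDerivAt (cG1 m l) ((-(m : ℝ) * (2 * l + 1) + m ^ 2 * x ^ 2) * cG m l x) x := by
  have hmx : HasDerivAt (fun x : ℝ => (m : ℝ) * x) (m : ℝ) x := by
    simpa using (hasDerivAt_id x).const_mul (m : ℝ)
  have h1 := ((polyDeriv m (derivative (Hr l)) x).const_mul (Real.sqrt (2 * m))).sub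
    (hmx.mul (polyDeriv m (Hr l) x))
  have h := h1.mul (expDeriv m x)
  have hc : Real.sqrt (2 * m) * Real.sqrt (2 * m) = 2 * m :=
    Real.mul_self_sqrt (by positivity)
  have hode := hermite_ode_real l (Real.sqrt (2 * m) * x)
  refine h.congr_deriv ?_
  simp only [cG, cG1, Pi.sub_apply, Pi.mul_apply]
  symm
  linear_combination (2 * (m : ℝ) * Real.exp (-(m : ℝ) * x ^ 2 / 2)) * hode
    - Real.exp (-(m : ℝ) * x ^ 2 / 2)
        * (derivative (derivative (Hr l))).eval (Real.sqrt (2 * m) * x) * hc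

end

/-- For `m ≥ 1` and `l ≥ 0`, `f(x,y,z) = He_l(√(2m) x) e^{-m x²/2} e^{imz}` is smooth and
satisfies `−(X² f + Y² f) = m(2l+1) f` with `X = ∂_x`, `Y = ∂_y − x ∂_z`, i.e. explicitly
`−(f_xx + f_yy − 2x f_yz + x² f_zz) = m(2l+1) f`. -/
theorem heisenberg_subLaplacian_eigenfunction (m : ℕ) (hm : 0 < m) (l : ℕ) :
    ContDiff ℝ (⊤ : ℕ∞) (fun p : ℝ × ℝ × ℝ => heisenbergEigenfunction m l p.1 p.2.1 p.2.2) ∧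
    ∀ x y z : ℝ,
      -(deriv (fun x' : ℝ => deriv (fun x'' : ℝ => heisenbergEigenfunction m l x'' y z) x') x
        + deriv (fun y' : ℝ => deriv (fun y'' : ℝ => heisenbergEigenfunction m l x y'' z) y') y
        - 2 * (x : ℂ) *
            deriv (fun y' : ℝ => deriv (fun z' : ℝ => heisenbergEigenfunction m l x y' z') z) y
        + (x : ℂ) ^ 2 *
            deriv (fun z' : ℝ => deriv (fun z'' : ℝ => heisenbergEigenfunction m l x y z'') z') z)
      = (m : ℂ) * (2 * (l : ℂ) + 1) * heisenbergEigenfunction m l x y z := by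
  have heq : ∀ x y z : ℝ, heisenbergEigenfunction m l x y z
      = ((cG m l x : ℝ) : ℂ) * Complex.exp (Complex.I * (m : ℂ) * (z : ℂ)) := heis_eq m l
  constructor
  · have h1 : ContDiff ℝ (⊤ : ℕ∞) (fun q : ℝ × ℝ × ℝ => ((cG m l q.1 : ℝ) : ℂ)) := by
      have hg : ContDiff ℝ (⊤ : ℕ∞) (cG m l) :=
        ((contDiff_poly_eval (Hr l)).comp (contDiff_const.mul contDiff_id)).mul
          (Real.contDiff_exp.comp ((contDiff_const.mul (contDiff_id.pow 2)).div_const 2))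
      exact Complex.ofRealCLM.contDiff.comp (hg.comp contDiff_fst)
    have h2 : ContDiff ℝ (⊤ : ℕ∞) (fun q : ℝ × ℝ × ℝ =>
        Complex.exp (Complex.I * (m : ℂ) * (q.2.2 : ℂ))) := by
      apply (Complex.contDiff_exp (𝕜 := ℝ)).comp
      exact contDiff_const.mul (Complex.ofRealCLM.contDiff.comp (contDiff_snd.comp contDiff_snd))
    have hfun : (fun q : ℝ × ℝ × ℝ => heisenbergEigenfunction m l q.1 q.2.1 q.2.2)
        = fun q : ℝ × ℝ × ℝ =>
            ((cG m l q.1 : ℝ) : ℂ) * Complex.exp (Complex.I * (m : ℂ) * (q.2.2 : ℂ)) := by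
      funext q
      exact heq q.1 q.2.1 q.2.2
    rw [hfun]
    exact h1.mul h2
  intro x y z
  set E : ℝ → ℂ := fun z => Complex.exp (Complex.I * (m : ℂ) * (z : ℂ)) with hE
  have hEd : ∀ z : ℝ, HasDerivAt E (Complex.I * m * E z) z := by
    intro z
    have h0 : HasDerivAt (fun z : ℝ => ((z : ℝ) : ℂ)) 1 z := by
      simpa using (hasDerivAt_id z).ofReal_comp
    have h1 : HasDerivAt (fun z : ℝ => Complex.I * (m : ℂ) * (z : ℂ)) (Complex.I * m) z := by
      simpa using h0.const_mul (Complex.I * (m : ℂ))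
    have := h1.cexp
    simpa [hE, mul_comm] using this
  have hy1 : deriv (fun y' : ℝ => deriv (fun y'' : ℝ => heisenbergEigenfunction m l x y'' z) y') y
      = 0 := by
    have h : (fun y' : ℝ => deriv (fun y'' : ℝ => heisenbergEigenfunction m l x y'' z) y')
        = fun _ => (0 : ℂ) := by
      funext y'
      have h2 : (fun y'' : ℝ => heisenbergEigenfunction m l x y'' z)
          = fun _ => ((cG m l x : ℝ) : ℂ) * E z := by funext y''; exact heq x y'' z
      rw [h2, deriv_const]
    rw [h, deriv_const]
  have hy2 : deriv (fun y' : ℝ => deriv (fun z' : ℝ => heisenbergEigenfunction m l x y' z') z) y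
      = 0 := by
    have h : (fun y' : ℝ => deriv (fun z' : ℝ => heisenbergEigenfunction m l x y' z') z)
        = fun _ => deriv (fun z' : ℝ => ((cG m l x : ℝ) : ℂ) * E z') z := by
      funext y'
      congr 1
      funext z'
      exact heq x y' z'
    rw [h, deriv_const]
  have hzfun : ∀ z' : ℝ, HasDerivAt (fun z'' : ℝ => heisenbergEigenfunction m l x y z'')
      (((cG m l x : ℝ) : ℂ) * (Complex.I * m * E z')) z' := by
    intro z'
    have := (hEd z').const_mul ((cG m l x : ℝ) : ℂ)
    refine this.congr_of_eventuallyEq ?_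
    filter_upwards with w
    exact heq x y w
  have hz2 : deriv (fun z' : ℝ => deriv (fun z'' : ℝ => heisenbergEigenfunction m l x y z'') z') z
      = ((cG m l x : ℝ) : ℂ) * (Complex.I * m * (Complex.I * m * E z)) := by
    have hout : (fun z' : ℝ => deriv (fun z'' : ℝ => heisenbergEigenfunction m l x y z'') z')
        = fun z' => ((cG m l x : ℝ) : ℂ) * (Complex.I * m * E z') := by
      funext z'
      exact (hzfun z').deriv
    rw [hout]
    have := ((hEd z).const_mul (Complex.I * (m : ℂ))).const_mul ((cG m l x : ℝ) : ℂ)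
    simpa [mul_assoc] using this.deriv
  have hxfun : ∀ x' : ℝ, HasDerivAt (fun x'' : ℝ => heisenbergEigenfunction m l x'' y z)
      (((cG1 m l x' : ℝ) : ℂ) * E z) x' := by
    intro x'
    have := ((cGDeriv m l x').ofReal_comp).mul_const (E z)
    refine this.congr_of_eventuallyEq ?_
    filter_upwards with w
    exact heq w y z
  have hx2 : deriv (fun x' : ℝ => deriv (fun x'' : ℝ => heisenbergEigenfunction m l x'' y z) x') x
      = (((-(m : ℝ) * (2 * l + 1) + m ^ 2 * x ^ 2) * cG m l x : ℝ) : ℂ) * E z := by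
    have hout : (fun x' : ℝ => deriv (fun x'' : ℝ => heisenbergEigenfunction m l x'' y z) x')
        = fun x' => ((cG1 m l x' : ℝ) : ℂ) * E z := by
      funext x'
      exact (hxfun x').deriv
    rw [hout]
    exact (((cG1Deriv m l x).ofReal_comp).mul_const (E z)).deriv
  rw [hx2, hy1, hy2, hz2, heq x y z]
  simp only [hE]
  push_cast
  ring_nf
  rw [Complex.I_sq]
  ring
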